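/- If f₀(x) = exp{−w₀ ℓ(θ₀, x)} is a probability density for some w₀ > 0, and the regularity conditions permitting differentiation under the integral hold, then J(θ₀) = w₀ I(θ₀), where I(θ) = ∫ ∇ℓ(θ,x) ∇ℓ(θ,x)ᵀ f₀(x) dx and J(θ) = ∫ ∇²ℓ(θ,x) f₀(x) dx; consequently tr(J I⁻¹ Jᵀ)/tr(J) = w₀ (assuming I(θ₀) is invertible and tr(J(θ₀)) ≠ 0). -/

import Mathlib

open MeasureTheory Matrix

/-- `i`-th partial derivative with respect to the parameter `θ ∈ ℝ^d`. -/
noncomputable def pder {d : ℕ} (i : Fin d) (h : (Fin d → ℝ) → ℝ) (θ : Fin d → ℝ) : ℝ :=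
  fderiv ℝ h θ (Pi.single i 1)

/-!
Twice differentiating the density `e^{-w ℓ}` in `θ` gives
`(w² ∂ᵢℓ ∂ⱼℓ - w ∂ᵢ∂ⱼℓ) e^{-w ℓ}`, whose integral vanishes once differentiation passes under
the integral sign (the density integrates to a constant). Hence `J = w I`, and then
`J I⁻¹ Jᵀ = w² I` by symmetry of `I`, whose trace is `w · tr J`.
-/

section pder

variable {d : ℕ} {f g : (Fin d → ℝ) → ℝ} {θ : Fin d → ℝ}

lemma pder_mul (hf : DifferentiableAt ℝ f θ) (hg : DifferentiableAt ℝ g θ) (i : Fin d) :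
    pder i (fun θ => f θ * g θ) θ = pder i f θ * g θ + f θ * pder i g θ := by
  simp only [pder, fderiv_fun_mul hf hg, _root_.add_apply, _root_.smul_apply, smul_eq_mul]
  ring

lemma pder_const_mul (hf : DifferentiableAt ℝ f θ) (c : ℝ) (i : Fin d) :
    pder i (fun θ => c * f θ) θ = c * pder i f θ := by
  simp [pder, fderiv_const_mul hf c]

lemma pder_exp_neg_mul (hf : DifferentiableAt ℝ f θ) (w : ℝ) (i : Fin d) :
    pder i (fun θ => Real.exp (-(w * f θ))) θ
      = -w * pder i f θ * Real.exp (-(w * f θ)) := by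
  rw [pder, ((hf.hasFDerivAt.const_mul w).fun_neg.exp).fderiv]
  simp only [pder, _root_.smul_apply, _root_.neg_apply, smul_eq_mul]
  ring

lemma ContDiff.differentiable_pder (hf : ContDiff ℝ 2 f) (j : Fin d) :
    Differentiable ℝ (pder j f) :=
  ((hf.fderiv_right (m := 1) (by norm_num)).clm_apply contDiff_const).differentiable
    (by norm_num)

lemma pder_pder_exp_neg_mul (hf : ContDiff ℝ 2 f) (w : ℝ) (i j : Fin d) :
    pder i (fun θ => pder j (fun θ' => Real.exp (-(w * f θ'))) θ) θ
      = w ^ 2 * (pder i f θ * pder j f θ * Real.exp (-(w * f θ)))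
        - w * (pder i (fun θ => pder j f θ) θ * Real.exp (-(w * f θ))) := by
  have hfd : Differentiable ℝ f := hf.differentiable (by norm_num)
  have hexp : Differentiable ℝ (fun θ => Real.exp (-(w * f θ))) := by fun_prop
  have hfirst : (fun θ => pder j (fun θ' => Real.exp (-(w * f θ'))) θ)
      = fun θ => -w * pder j f θ * Real.exp (-(w * f θ)) :=
    funext fun θ => pder_exp_neg_mul (hfd θ) w j
  have hpj := (hf.differentiable_pder j θ).const_mul (-w)
  rw [hfirst, pder_mul hpj (hexp θ), pder_const_mul (hf.differentiable_pder j θ),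
    pder_exp_neg_mul (hfd θ)]
  ring

end pder

theorem Matrix.trace_smul_mul_inv_mul_transpose_div_trace {n K : Type*} [Fintype n]
    [DecidableEq n] [Field K] {A : Matrix n n K} (hA : A.IsSymm) (hdet : IsUnit A.det)
    {c : K} (hc : (c • A).trace ≠ 0) :
    (c • A * A⁻¹ * (c • A)ᵀ).trace / (c • A).trace = c := by
  rw [trace_smul, smul_eq_mul] at hc
  rw [transpose_smul, hA.eq, smul_mul, mul_nonsing_inv _ hdet, smul_mul, Matrix.one_mul,
    smul_smul, trace_smul, trace_smul, smul_eq_mul, smul_eq_mul, div_eq_iff hc]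
  ring

theorem tempered_bartlett_second_identity {d : ℕ} {Ω : Type*} [MeasurableSpace Ω]
    {μ : Measure Ω} {ℓ : (Fin d → ℝ) → Ω → ℝ} {θ₀ : Fin d → ℝ} {w : ℝ} (hw : w ≠ 0)
    (hC2 : ∀ x, ContDiff ℝ 2 (fun θ => ℓ θ x)) {i j : Fin d}
    (hexch : (∫ x, pder i (fun θ => pder j (fun θ' => Real.exp (-(w * ℓ θ' x))) θ) θ₀ ∂μ) = 0)
    (hintI : Integrable (fun x =>
      pder i (fun θ => ℓ θ x) θ₀ * pder j (fun θ => ℓ θ x) θ₀ * Real.exp (-(w * ℓ θ₀ x))) μ)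
    (hintJ : Integrable (fun x =>
      pder i (fun θ => pder j (fun θ' => ℓ θ' x) θ) θ₀ * Real.exp (-(w * ℓ θ₀ x))) μ) :
    (∫ x, pder i (fun θ => pder j (fun θ' => ℓ θ' x) θ) θ₀ * Real.exp (-(w * ℓ θ₀ x)) ∂μ)
      = w * ∫ x, pder i (fun θ => ℓ θ x) θ₀ * pder j (fun θ => ℓ θ x) θ₀
          * Real.exp (-(w * ℓ θ₀ x)) ∂μ := by
  simp only [pder_pder_exp_neg_mul (hC2 _)] at hexch
  rw [integral_sub (hintI.const_mul _) (hintJ.const_mul _), integral_const_mul,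
    integral_const_mul] at hexch
  exact mul_left_cancel₀ hw (by linear_combination -hexch)

theorem tempered_loss_calibration_general (d : ℕ) {Ω : Type*} [MeasurableSpace Ω] (μ : Measure Ω)
    (ℓ : (Fin d → ℝ) → Ω → ℝ) (θ₀ : Fin d → ℝ) (w₀ : ℝ) (hw₀ : 0 < w₀)
    (hC2 : ∀ x, ContDiff ℝ 2 (fun θ => ℓ θ x))
    (hexch2 : ∀ i j,
      (∫ x, pder i (fun θ => pder j (fun θ' => Real.exp (-(w₀ * ℓ θ' x))) θ) θ₀ ∂μ) = 0)
    (Imat Jmat : Matrix (Fin d) (Fin d) ℝ)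
    (hImat : Imat = Matrix.of fun i j =>
      ∫ x, pder i (fun θ => ℓ θ x) θ₀ * pder j (fun θ => ℓ θ x) θ₀
          * Real.exp (-(w₀ * ℓ θ₀ x)) ∂μ)
    (hJmat : Jmat = Matrix.of fun i j =>
      ∫ x, pder i (fun θ => pder j (fun θ' => ℓ θ' x) θ) θ₀
          * Real.exp (-(w₀ * ℓ θ₀ x)) ∂μ)
    (hintI : ∀ i j, Integrable (fun x =>
      pder i (fun θ => ℓ θ x) θ₀ * pder j (fun θ => ℓ θ x) θ₀
        * Real.exp (-(w₀ * ℓ θ₀ x))) μ)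
    (hintJ : ∀ i j, Integrable (fun x =>
      pder i (fun θ => pder j (fun θ' => ℓ θ' x) θ) θ₀
        * Real.exp (-(w₀ * ℓ θ₀ x))) μ) :
    Jmat = w₀ • Imat
    ∧ (IsUnit Imat.det → Jmat.trace ≠ 0 →
        (Jmat * Imat⁻¹ * Jmatᵀ).trace / Jmat.trace = w₀) := by
  have hJI : Jmat = w₀ • Imat := by
    ext i j
    rw [hImat, hJmat, Matrix.smul_apply, of_apply, of_apply, smul_eq_mul]
    exact tempered_bartlett_second_identity hw₀.ne' hC2 (hexch2 i j) (hintI i j) (hintJ i j)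
  have hIsymm : Imat.IsSymm := by
    refine IsSymm.ext fun i j => ?_
    simp only [hImat, of_apply, mul_comm (pder j _ θ₀)]
  refine ⟨hJI, fun hdet htr => ?_⟩
  rw [hJI] at htr ⊢
  exact trace_smul_mul_inv_mul_transpose_div_trace hIsymm hdet htr

/-- **Lemma 2 of the paper.** If the data density is the tempered loss
`f₀(x) = exp{−w₀ ℓ(θ₀,x)}` and differentiation under the integral sign is valid, then
`J(θ₀) = w₀ I(θ₀)`, and consequently the information-matching calibration
`tr(J I⁻¹ Jᵀ)/tr(J)` equals `w₀` (when `I(θ₀)` is invertible and `tr J(θ₀) ≠ 0`). -/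
theorem tempered_loss_calibration (d : ℕ) {Ω : Type*} [MeasurableSpace Ω] (μ : Measure Ω)
    (ℓ : (Fin d → ℝ) → Ω → ℝ) (θ₀ : Fin d → ℝ) (w₀ : ℝ) (hw₀ : 0 < w₀)
    (hC2 : ∀ x, ContDiff ℝ 2 (fun θ => ℓ θ x))
    (hdens : (∫ x, Real.exp (-(w₀ * ℓ θ₀ x)) ∂μ) = 1)
    (hexch1 : ∀ i, (∫ x, pder i (fun θ => Real.exp (-(w₀ * ℓ θ x))) θ₀ ∂μ) = 0)
    (hexch2 : ∀ i j,
      (∫ x, pder i (fun θ => pder j (fun θ' => Real.exp (-(w₀ * ℓ θ' x))) θ) θ₀ ∂μ) = 0)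
    (Imat Jmat : Matrix (Fin d) (Fin d) ℝ)
    (hImat : Imat = Matrix.of fun i j =>
      ∫ x, pder i (fun θ => ℓ θ x) θ₀ * pder j (fun θ => ℓ θ x) θ₀
          * Real.exp (-(w₀ * ℓ θ₀ x)) ∂μ)
    (hJmat : Jmat = Matrix.of fun i j =>
      ∫ x, pder i (fun θ => pder j (fun θ' => ℓ θ' x) θ) θ₀
          * Real.exp (-(w₀ * ℓ θ₀ x)) ∂μ)
    (hintI : ∀ i j, Integrable (fun x =>
      pder i (fun θ => ℓ θ x) θ₀ * pder j (fun θ => ℓ θ x) θ₀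
        * Real.exp (-(w₀ * ℓ θ₀ x))) μ)
    (hintJ : ∀ i j, Integrable (fun x =>
      pder i (fun θ => pder j (fun θ' => ℓ θ' x) θ) θ₀
        * Real.exp (-(w₀ * ℓ θ₀ x))) μ) :
    Jmat = w₀ • Imat
    ∧ (IsUnit Imat.det → Jmat.trace ≠ 0 →
        (Jmat * Imat⁻¹ * Jmatᵀ).trace / Jmat.trace = w₀) :=
  tempered_loss_calibration_general d μ ℓ θ₀ w₀ hw₀ hC2 hexch2 Imat Jmat hImat hJmat hintI hintJ
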